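/- arXiv:1006.2348 — 2 statements merged into one kernel-verified Lean document; each statement's English description precedes it below -/
import Mathlib

section
/- Let F be either ℚ or an imaginary quadratic field, with ring of integers O_F, and let a ∈ O_F be nonzero, square-free and not a square in F, so that K = F(√a) is a quadratic field extension with nontrivial F-automorphism σ and norm N_{K/F}(x) = x·σ(x). Fix a field embedding φ : K → ℂ. Let b ∈ K \ F and write b = b_n / b_d with b_n, b_d ∈ O_K and b_d ≠ 0. Then for all x0, x1 ∈ O_K with (x0, x1) ≠ (0, 0), one has |φ( N_{K/F}( N_{K/F}(x0) − b·N_{K/F}(x1) ) )| ≥ 1 / |φ( N_{K/F}(b_d) )|. In particular the 2×4 multiblock code built from Cay(K,b) over O_K satisfies the generalized non-vanishing determinant property. -/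
/-!
`K/F` is a separable quadratic extension, so `Gal(K/F) = {1, σ}` and `x * σ x` is the image of
the norm `N_{K/F}(x)`. Since `N(x0), N(x1) ∈ F` and `b ∉ F`, the element
`m = N(x0) - b N(x1)` is nonzero, and `m * b_d = N(x0) b_d - N(x1) b_n` is a nonzero algebraic
integer of `K`. Hence `N(m) N(b_d)` is a nonzero algebraic integer of `F`. As `F` has a single
infinite place, the product formula gives it absolute value at least `1` under every embedding
into `ℂ`.
-/

open NumberField Module

namespace NumberField.InfinitePlace

theorem subsingleton_of_finrank_eq_one_or_imaginary_quadratic {F : Type*} [Field F]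
    [NumberField F]
    (hF : finrank ℚ F = 1 ∨ (finrank ℚ F = 2 ∧ ∀ w : InfinitePlace F, w.IsComplex)) :
    Subsingleton (InfinitePlace F) := by
  rw [← Fintype.card_le_one_iff_subsingleton, card_eq_nrRealPlaces_add_nrComplexPlaces]
  have hrank := card_add_two_mul_card_eq_rank F
  rcases hF with h1 | ⟨h2, hc⟩
  · omega
  · have : nrRealPlaces F = 0 := nrRealPlaces_eq_zero_iff.mpr ⟨hc⟩
    omega

variable {F : Type*} [Field F] [NumberField F] [Subsingleton (InfinitePlace F)]

theorem one_le_norm_of_subsingleton {z : 𝓞 F} (hz : z ≠ 0) (ψ : F →+* ℂ) : 1 ≤ ‖ψ z‖ :=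
  one_le_of_lt_one (w := mk ψ) hz (fun w hw ↦ absurd (Subsingleton.elim w _) hw)

theorem one_le_norm_algebraMap_norm_of_subsingleton {K : Type*} [Field K] [NumberField K]
    [Algebra F K] {y : K} (hy : IsIntegral ℤ y) (hy0 : y ≠ 0) (φ : K →+* ℂ) :
    1 ≤ ‖φ (algebraMap F K (Algebra.norm F y))‖ :=
  one_le_norm_of_subsingleton (z := ⟨_, Algebra.isIntegral_norm F hy⟩)
    (RingOfIntegers.coe_ne_zero_iff.mp (Algebra.norm_ne_zero_iff.mpr hy0))
    (φ.comp (algebraMap F K))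

end NumberField.InfinitePlace

theorem Algebra.IsQuadraticExtension.algebraMap_norm_eq_mul {F K : Type*} [Field F] [Field K]
    [Algebra F K] [IsQuadraticExtension F K] [IsGalois F K] {σ : Gal(K/F)} (hσ : σ ≠ 1)
    (x : K) : algebraMap F K (Algebra.norm F x) = x * σ x := by
  classical
  have huniv : ({1, σ} : Finset Gal(K/F)) = Finset.univ := by
    refine Finset.eq_univ_of_card _ ?_
    rw [Finset.card_pair hσ.symm, ← Nat.card_eq_fintype_card, IsGalois.card_aut_eq_finrank,
      IsQuadraticExtension.finrank_eq_two]
  rw [Algebra.norm_eq_prod_automorphisms, ← huniv, Finset.prod_pair hσ.symm, AlgEquiv.one_apply]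

theorem algebraMap_sub_mul_algebraMap_ne_zero {F K : Type*} [Field F] [Field K] [Algebra F K]
    {b : K} (hb : b ∉ Set.range (algebraMap F K)) {u v : F} (huv : (u, v) ≠ (0, 0)) :
    algebraMap F K u - b * algebraMap F K v ≠ 0 := by
  intro h
  by_cases hv : v = 0
  · subst hv
    simp_all
  · refine hb ⟨u / v, ?_⟩
    rw [map_div₀, div_eq_iff ((map_ne_zero _).mpr hv)]
    linear_combination h

theorem multiblock_code_generalized_nvd_general {F K : Type*} [Field F] [NumberField F]
    [Field K] [NumberField K] [Algebra F K]
    (hF : Module.finrank ℚ F = 1 ∨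
      (Module.finrank ℚ F = 2 ∧ ∀ w : InfinitePlace F, w.IsComplex))
    (hdim : Module.finrank F K = 2)
    (σ : K ≃ₐ[F] K) (hσ : σ ≠ AlgEquiv.refl)
    (b : K) (hb : b ∉ Set.range (algebraMap F K))
    (b_n b_d : 𝓞 K) (hbd : (b_d : K) ≠ 0) (hbe : (b_n : K) = b * (b_d : K))
    (φ : K →+* ℂ) :
    ∀ x0 x1 : 𝓞 K, (x0, x1) ≠ (0, 0) →
      1 / ‖φ ((b_d : K) * σ (b_d : K))‖ ≤
        ‖φ
          ((((x0 : K) * σ (x0 : K)) - b * ((x1 : K) * σ (x1 : K))) *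
            σ (((x0 : K) * σ (x0 : K)) - b * ((x1 : K) * σ (x1 : K))))‖ := by
  have : Algebra.IsQuadraticExtension F K := ⟨hdim⟩
  have := InfinitePlace.subsingleton_of_finrank_eq_one_or_imaginary_quadratic hF
  have hN (x : K) : x * σ x = algebraMap F K (Algebra.norm F x) :=
    (Algebra.IsQuadraticExtension.algebraMap_norm_eq_mul hσ x).symm
  intro x0 x1 hx
  simp only [hN]
  set N0 := algebraMap F K (Algebra.norm F (x0 : K))
  set N1 := algebraMap F K (Algebra.norm F (x1 : K))
  have hm : N0 - b * N1 ≠ 0 :=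
    algebraMap_sub_mul_algebraMap_ne_zero hb (by simpa [Prod.ext_iff] using hx)
  have hint : IsIntegral ℤ ((N0 - b * N1) * b_d) := by
    rw [show (N0 - b * N1) * b_d = N0 * b_d - N1 * b_n by rw [hbe]; ring]
    exact ((Algebra.isIntegral_norm F x0.isIntegral_coe).algebraMap.mul b_d.isIntegral_coe).sub
      ((Algebra.isIntegral_norm F x1.isIntegral_coe).algebraMap.mul b_n.isIntegral_coe)
  have hpos : 0 < ‖φ (algebraMap F K (Algebra.norm F (b_d : K)))‖ := by
    simpa [Algebra.norm_eq_zero_iff] using hbd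
  rw [div_le_iff₀ hpos, ← norm_mul, ← map_mul, ← map_mul, ← map_mul]
  exact InfinitePlace.one_le_norm_algebraMap_norm_of_subsingleton hint (mul_ne_zero hm hbd) φ

/-- Let `F` be `ℚ` or an imaginary quadratic field, and `K = F(√a)` a quadratic extension
(`a ∈ 𝓞 F` nonzero, square-free, not a square in `F`) with nontrivial `F`-automorphism
`σ` and norm `N_{K/F}(x) = x·σ(x)`. Fix an embedding `φ : K → ℂ`. Let `b ∈ K \ F`,
written `b = b_n / b_d` with `b_n, b_d ∈ 𝓞 K`, `b_d ≠ 0`. Then for all `x0, x1 ∈ 𝓞 K`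
not both zero, `|φ(N_{K/F}(N_{K/F}(x0) − b·N_{K/F}(x1)))| ≥ 1 / |φ(N_{K/F}(b_d))|`:
the 2×4 multiblock code built from `Cay(K,b)` over `𝓞 K` satisfies the generalized
non-vanishing determinant property. -/
theorem multiblock_code_generalized_nvd {F K : Type*} [Field F] [NumberField F]
    [Field K] [NumberField K] [Algebra F K]
    (hF : Module.finrank ℚ F = 1 ∨
      (Module.finrank ℚ F = 2 ∧ ∀ w : InfinitePlace F, w.IsComplex))
    (a : 𝓞 F) (ha : a ≠ 0) (hasf : Squarefree a) (hasq : ¬∃ y : F, y ^ 2 = (a : F))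
    (hdim : Module.finrank F K = 2)
    (s : K) (hs : s ^ 2 = algebraMap F K (a : F))
    (σ : K ≃ₐ[F] K) (hσ : σ ≠ AlgEquiv.refl)
    (b : K) (hb : b ∉ Set.range (algebraMap F K))
    (b_n b_d : 𝓞 K) (hbd : (b_d : K) ≠ 0) (hbe : (b_n : K) = b * (b_d : K))
    (φ : K →+* ℂ) :
    ∀ x0 x1 : 𝓞 K, (x0, x1) ≠ (0, 0) →
      1 / ‖φ ((b_d : K) * σ (b_d : K))‖ ≤
        ‖φ
          ((((x0 : K) * σ (x0 : K)) - b * ((x1 : K) * σ (x1 : K))) *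
            σ (((x0 : K) * σ (x0 : K)) - b * ((x1 : K) * σ (x1 : K))))‖ :=
  multiblock_code_generalized_nvd_general hF hdim σ hσ b hb b_n b_d hbd hbe φ
end

section
/- Let F be a field of characteristic not 2, let a ∈ F be a nonsquare, and let p, q ∈ F with q ≠ 0. If (x0, x1, x2, x3) ∈ F⁴ is not the zero tuple, then ((x0² − a·x1²) − p·(x2² − a·x3²))² − a·q²·(x2² − a·x3²)² ≠ 0. Equivalently, the 4×4 matrix with rows (x0, a·x1, p·x2 − a·q·x3, a·q·x2 − a·p·x3), (x1, x0, q·x2 − p·x3, p·x2 − a·q·x3), (x2, a·x3, x0, −a·x1), (x3, x2, −x1, x0) is invertible, so the 4×4 space-time block code obtained from the left regular representation of Cay(F(√a), p + q√a) over F is fully diverse. -/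
/-! Writing `N(u, v) = u² − a v²` for the norm form of `F(√a)/F`, the quantity in question is
`N(N(x0, x1) − p N(x2, x3), q N(x2, x3))`. Since `a` is not a square, `N` is anisotropic, so
its vanishing forces `q N(x2, x3) = 0` and `N(x0, x1) = p N(x2, x3)`; with `q ≠ 0` this makes
both inner norms, hence all four coordinates, vanish. The matrix part follows because the
determinant of the matrix is exactly this quantity. -/

theorem eq_zero_and_eq_zero_of_sq_sub_mul_sq_eq_zero {F : Type*} [Field F] {a : F}
    (ha : ¬∃ y : F, y ^ 2 = a) (u v : F) (h : u ^ 2 - a * v ^ 2 = 0) : u = 0 ∧ v = 0 := by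
  by_cases hv : v = 0
  · subst hv
    exact ⟨pow_eq_zero_iff two_ne_zero |>.mp (by simpa using h), rfl⟩
  · exact (ha ⟨u / v, by field_simp; linear_combination h⟩).elim

theorem det_cay_left_regular_matrix {R : Type*} [CommRing R] (a p q x0 x1 x2 x3 : R) :
    (!![x0, a * x1, p * x2 - a * q * x3, a * q * x2 - a * p * x3;
        x1, x0, q * x2 - p * x3, p * x2 - a * q * x3;
        x2, a * x3, x0, -(a * x1);
        x3, x2, -x1, x0]).det =
      ((x0 ^ 2 - a * x1 ^ 2) - p * (x2 ^ 2 - a * x3 ^ 2)) ^ 2 -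
        a * q ^ 2 * (x2 ^ 2 - a * x3 ^ 2) ^ 2 := by
  simp [Matrix.det_succ_row_zero, Fin.sum_univ_succ, Fin.succAbove]
  ring

theorem cay_four_by_four_fully_diverse_general {F : Type*} [Field F]
    (a : F) (ha : ¬∃ y : F, y ^ 2 = a)
    (p q : F) (hq : q ≠ 0)
    (x0 x1 x2 x3 : F) (hx : (x0, x1, x2, x3) ≠ (0, 0, 0, 0)) :
    ((x0 ^ 2 - a * x1 ^ 2) - p * (x2 ^ 2 - a * x3 ^ 2)) ^ 2 -
        a * q ^ 2 * (x2 ^ 2 - a * x3 ^ 2) ^ 2 ≠ 0 ∧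
    IsUnit (!![x0, a * x1, p * x2 - a * q * x3, a * q * x2 - a * p * x3;
               x1, x0, q * x2 - p * x3, p * x2 - a * q * x3;
               x2, a * x3, x0, -(a * x1);
               x3, x2, -x1, x0]) := by
  have aniso := eq_zero_and_eq_zero_of_sq_sub_mul_sq_eq_zero ha
  have hnorm : ((x0 ^ 2 - a * x1 ^ 2) - p * (x2 ^ 2 - a * x3 ^ 2)) ^ 2 -
      a * q ^ 2 * (x2 ^ 2 - a * x3 ^ 2) ^ 2 ≠ 0 := by
    intro h
    obtain ⟨hN1, hqN2⟩ := aniso ((x0 ^ 2 - a * x1 ^ 2) - p * (x2 ^ 2 - a * x3 ^ 2))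
      (q * (x2 ^ 2 - a * x3 ^ 2)) (by linear_combination h)
    have hN2 : x2 ^ 2 - a * x3 ^ 2 = 0 := (mul_eq_zero.mp hqN2).resolve_left hq
    obtain ⟨h2, h3⟩ := aniso x2 x3 hN2
    obtain ⟨h0, h1⟩ := aniso x0 x1 (by linear_combination hN1 + p * hN2)
    exact hx (by rw [h0, h1, h2, h3])
  refine ⟨hnorm, ?_⟩
  rw [Matrix.isUnit_iff_isUnit_det, det_cay_left_regular_matrix, isUnit_iff_ne_zero]
  exact hnorm

/-- Let `F` be a field of characteristic not 2, `a ∈ F` a nonsquare, and `p, q ∈ F` with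
`q ≠ 0`. For every nonzero tuple `(x0,x1,x2,x3) ∈ F⁴` the quantity
`((x0² − a·x1²) − p·(x2² − a·x3²))² − a·q²·(x2² − a·x3²)²` is nonzero; equivalently, the
corresponding 4×4 left-regular-representation matrix of `Cay(F(√a), p + q√a)` is
invertible, so the associated 4×4 space-time block code is fully diverse. -/
theorem cay_four_by_four_fully_diverse {F : Type*} [Field F]
    (hchar : ringChar F ≠ 2)
    (a : F) (ha : ¬∃ y : F, y ^ 2 = a)
    (p q : F) (hq : q ≠ 0)
    (x0 x1 x2 x3 : F) (hx : (x0, x1, x2, x3) ≠ (0, 0, 0, 0)) :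
    ((x0 ^ 2 - a * x1 ^ 2) - p * (x2 ^ 2 - a * x3 ^ 2)) ^ 2 -
        a * q ^ 2 * (x2 ^ 2 - a * x3 ^ 2) ^ 2 ≠ 0 ∧
    IsUnit (!![x0, a * x1, p * x2 - a * q * x3, a * q * x2 - a * p * x3;
               x1, x0, q * x2 - p * x3, p * x2 - a * q * x3;
               x2, a * x3, x0, -(a * x1);
               x3, x2, -x1, x0]) :=
  cay_four_by_four_fully_diverse_general a ha p q hq x0 x1 x2 x3 hx
end
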